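/- arXiv:2102.02112 — 2 statements merged into one kernel-verified Lean document; each statement's English description precedes it below -/
import Mathlib

section
/- Let f : [c,d] → ℝ be continuous. Then there exists x ∈ [c,d) such that the upper right Dini derivative of f at x satisfies limsup_{t→x⁺} (f(t)-f(x))/(t-x) ≤ (f(d)-f(c))/(d-c). -/
/-
If `r < dPlus f` on `[c, d)`, then `f` cannot fall below a line of slope `r` started at any point
of the interval (the comparison principle for right difference quotients, applied to `-f`).
Taking `r` the chord slope and starting the line at a point `t` near `c` where `f` lies strictly
above the chord, `f d` would lie strictly above the chord's endpoint, which is absurd.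
-/

open Filter Set

/-- Upper right Dini derivative, valued in the extended reals. -/
noncomputable def dPlus (f : ℝ → ℝ) (x : ℝ) : EReal :=
  Filter.limsup (fun t => (((f t - f x) / (t - x) : ℝ) : EReal)) (nhdsWithin x (Set.Ioi x))

open scoped Topology

theorem frequently_lt_slope_of_lt_dPlus {f : ℝ → ℝ} {x r : ℝ} (h : (r : EReal) < dPlus f x) :
    ∃ᶠ z in 𝓝[>] x, r < slope f x z := by
  refine (frequently_lt_of_lt_limsup (by isBoundedDefault) h).mono fun z hz => ?_
  rw [slope_def_field]
  exact_mod_cast hz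

theorem add_mul_sub_le_of_frequently_lt_slope {f : ℝ → ℝ} {a b r : ℝ}
    (hf : ContinuousOn f (Icc a b)) (h : ∀ x ∈ Ico a b, ∃ᶠ z in 𝓝[>] x, r < slope f x z) :
    ∀ ⦃x⦄, x ∈ Icc a b → f a + r * (x - a) ≤ f x := by
  intro x hx
  have hline (y : ℝ) : HasDerivWithinAt (fun t => -f a - r * (t - a)) (-r) (Ici y) y := by
    simpa using ((hasDerivAt_id y).sub_const a |>.const_mul r |>.const_sub (-f a)).hasDerivWithinAt
  have := image_le_of_liminf_slope_right_le_deriv_boundary (f := -f) hf.neg (by simp)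
    (by fun_prop) (fun y _ => hline y)
    (fun y hy r' hr' => (h y hy).mono fun z hz => by
      rw [slope_neg_fun]
      simp only [Pi.neg_apply]
      linarith) hx
  simp only [Pi.neg_apply] at this
  linarith

/-- One-sided mean value inequality for the upper right Dini derivative. -/
theorem exists_dPlus_le_slope (c d : ℝ) (hcd : c < d) (f : ℝ → ℝ)
    (hf : ContinuousOn f (Set.Icc c d)) :
    ∃ x ∈ Set.Ico c d, dPlus f x ≤ (((f d - f c) / (d - c) : ℝ) : EReal) := by
  by_contra! h
  set r := (f d - f c) / (d - c)
  have hr : r * (d - c) = f d - f c := div_mul_cancel₀ _ (sub_ne_zero.2 hcd.ne')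
  obtain ⟨t, hslope, htd : t < d, hct : c < t⟩ :=
    ((frequently_lt_slope_of_lt_dPlus (h c ⟨le_rfl, hcd⟩)).and_eventually
      ((eventually_nhdsWithin_of_eventually_nhds (Iio_mem_nhds hcd)).and
        self_mem_nhdsWithin)).exists
  have hleft : f c + r * (t - c) < f t := by
    rw [slope_def_field, lt_div_iff₀ (sub_pos.2 hct)] at hslope
    linarith
  have hright : f t + r * (d - t) ≤ f d :=
    add_mul_sub_le_of_frequently_lt_slope (hf.mono (Icc_subset_Icc hct.le le_rfl))
      (fun x hx => frequently_lt_slope_of_lt_dPlus (h x ⟨hct.le.trans hx.1, hx.2⟩))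
      ⟨htd.le, le_rfl⟩
  linarith
end

section
/- Let k ∈ ℝ and suppose g, g̃ : [0,μ] → ℝ are continuous with g(0) = g̃(0) and g(μ) = g̃(μ), where g̃ is twice differentiable on (0,μ) with g̃''(t) + k·g̃(t) = 1 for all t ∈ (0,μ), and g satisfies g''(t) + k·g(t) ≤ 1 in the support sense for all t ∈ (0,μ) (i.e., for each t there is A ∈ ℝ with g(t+τ) ≤ g(t) + Aτ + ((1 − k g(t))/2)τ² + o(τ²)). Assume μ < π/√k if k > 0. Then g(t) ≥ g̃(t) for all t ∈ [0,μ]. -/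
open Filter Set

/-- `g''(t) ≤ B` in the support sense. -/
def SuppSecondLE (g : ℝ → ℝ) (t B : ℝ) : Prop :=
  ∃ A : ℝ, ∀ ε > (0 : ℝ), ∀ᶠ τ in nhds (0 : ℝ),
    g (t + τ) ≤ g t + A * τ + B / 2 * τ ^ 2 + ε * τ ^ 2

/-!
If `g̃ > g` somewhere, scale the barrier `ψ s = cos (α (s - μ/2))`, with `√k < α < π/μ` and hence
`ψ > 0` on `[0, μ]`, until `m ψ` touches `g̃ - g` from above at an interior point `t`. Then
`g̃ - m ψ` touches `g` from below at `t`, so its classical second derivative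
`1 - k g̃(t) + m α² ψ(t)` is at most the support bound `1 - k g(t) = 1 - k g̃(t) + k m ψ(t)`,
contradicting `α² > k`.
-/

open Topology Real

theorem suppSecondLE_iff_eventually_nhds {g : ℝ → ℝ} {t B : ℝ} :
    SuppSecondLE g t B ↔ ∃ A : ℝ, ∀ ε > (0 : ℝ), ∀ᶠ s in 𝓝 t,
      g s ≤ g t + A * (s - t) + B / 2 * (s - t) ^ 2 + ε * (s - t) ^ 2 := by
  simp only [SuppSecondLE, ← map_add_left_nhds_zero t, eventually_map, add_sub_cancel_left]

theorem SuppSecondLE.of_eventually_le {f g : ℝ → ℝ} {t B : ℝ} (hg : SuppSecondLE g t B)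
    (hfg : ∀ᶠ s in 𝓝 t, f s ≤ g s) (heq : f t = g t) : SuppSecondLE f t B := by
  obtain ⟨A, hA⟩ := suppSecondLE_iff_eventually_nhds.1 hg
  refine suppSecondLE_iff_eventually_nhds.2 ⟨A, fun ε hε => ?_⟩
  filter_upwards [hA ε hε, hfg] with s hgs hfgs
  rw [heq]
  exact hfgs.trans hgs

/-- Otherwise `f` minus a slightly steeper quadratic has a strict local maximum at `t` and a
positive second derivative there, against the second derivative test. -/
theorem SuppSecondLE.le_of_hasDerivAt {f f' : ℝ → ℝ} {t B f'' : ℝ} (hB : SuppSecondLE f t B)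
    (hf : ∀ᶠ s in 𝓝 t, HasDerivAt f (f' s) s) (hf' : HasDerivAt f' f'' t) : f'' ≤ B := by
  by_contra! hlt
  obtain ⟨A, hA⟩ := suppSecondLE_iff_eventually_nhds.1 hB
  set ε := (f'' - B) / 8 with hε_def
  have hε : 0 < ε := by linarith
  set C := B / 2 + 2 * ε
  set φ : ℝ → ℝ := fun s => f s - A * (s - t) - C * (s - t) ^ 2
  set φ' : ℝ → ℝ := fun s => f' s - A - 2 * C * (s - t)
  have hφ : ∀ᶠ s in 𝓝 t, HasDerivAt φ (φ' s) s := by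
    filter_upwards [hf] with s hs
    refine ((hs.sub (((hasDerivAt_id' s).sub_const t).const_mul A)).sub
      ((((hasDerivAt_id' s).sub_const t).pow 2).const_mul C)).congr_deriv ?_
    simp only [φ']
    ring
  have hφ' : HasDerivAt φ' (f'' - 2 * C) t :=
    ((hf'.sub_const A).sub (((hasDerivAt_id' t).sub_const t).const_mul (2 * C))).congr_deriv
      (by ring)
  have hmax : ∀ᶠ s in 𝓝 t, φ s ≤ φ t - ε * (s - t) ^ 2 := by
    filter_upwards [hA ε hε] with s hs
    simp only [φ, C, sub_self]
    linarith
  have hmin : IsLocalMin φ t := by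
    refine isLocalMin_of_deriv_deriv_pos ?_ ?_ hφ.self_of_nhds.continuousAt
    · rw [EventuallyEq.deriv_eq (hφ.mono fun s hs => hs.deriv), hφ'.deriv]
      linarith [show C = B / 2 + 2 * ε from rfl]
    · exact IsLocalMax.deriv_eq_zero <| hmax.mono fun s hs => by nlinarith [sq_nonneg (s - t)]
  obtain ⟨s, ⟨hs_max, hs_min⟩, hst⟩ :=
    ((hmax.and hmin).filter_mono nhdsWithin_le_nhds |>.and (self_mem_nhdsWithin (s := {t}ᶜ))).exists
  have : 0 < ε * (s - t) ^ 2 := by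
    have : s - t ≠ 0 := sub_ne_zero.2 hst
    positivity
  linarith

theorem hasDerivAt_cos_mul_sub (α c s : ℝ) :
    HasDerivAt (fun s => cos (α * (s - c))) (-α * sin (α * (s - c))) s := by
  refine (((hasDerivAt_id' s).sub_const c).const_mul α).cos.congr_deriv ?_
  ring

theorem hasDerivAt_neg_mul_sin_mul_sub (α c s : ℝ) :
    HasDerivAt (fun s => -α * sin (α * (s - c))) (-(α ^ 2 * cos (α * (s - c)))) s := by
  refine ((((hasDerivAt_id' s).sub_const c).const_mul α).sin.const_mul (-α)).congr_deriv ?_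
  ring

theorem cos_mul_sub_half_pos {α μ s : ℝ} (hα : 0 < α) (hαμ : α * μ < π)
    (hs : s ∈ Icc 0 μ) : 0 < cos (α * (s - μ / 2)) := by
  have h₀ : 0 ≤ α * s := mul_nonneg hα.le hs.1
  have h₁ : 0 ≤ α * (μ - s) := mul_nonneg hα.le (sub_nonneg.2 hs.2)
  apply cos_pos_of_mem_Ioo
  constructor <;> nlinarith

theorem exists_sqrt_lt_and_mul_lt_pi {k μ : ℝ} (hμ : 0 < μ) (hμπ : 0 < k → μ < π / √k) :
    ∃ α, √k < α ∧ α * μ < π := by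
  have hk : √k < π / μ := by
    rcases le_or_gt k 0 with hk | hk
    · rw [sqrt_eq_zero_of_nonpos hk]
      exact div_pos pi_pos hμ
    · have hsqrt : 0 < √k := sqrt_pos.2 hk
      rw [lt_div_iff₀ hμ, mul_comm, ← lt_div_iff₀ hsqrt]
      exact hμπ hk
  refine ⟨(√k + π / μ) / 2, by linarith, ?_⟩
  rw [← lt_div_iff₀ hμ]
  linarith

/-- The maximum of `w / ψ` over `[a, b]` scales `ψ` to touch `w` from above. -/
theorem exists_mem_Ioo_eq_mul_and_le_mul {w ψ : ℝ → ℝ} {a b : ℝ}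
    (hw : ContinuousOn w (Icc a b)) (hψ : ContinuousOn ψ (Icc a b))
    (hψ_pos : ∀ s ∈ Icc a b, 0 < ψ s) (ha : w a ≤ 0) (hb : w b ≤ 0)
    (hpos : ∃ s ∈ Icc a b, 0 < w s) :
    ∃ t ∈ Ioo a b, ∃ m > 0, w t = m * ψ t ∧ ∀ s ∈ Icc a b, w s ≤ m * ψ s := by
  obtain ⟨s₁, hs₁, hws₁⟩ := hpos
  obtain ⟨t, ht, hmax⟩ := isCompact_Icc.exists_isMaxOn ⟨s₁, hs₁⟩
    (hw.div hψ fun s hs => (hψ_pos s hs).ne')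
  have hm : 0 < w t / ψ t := (div_pos hws₁ (hψ_pos s₁ hs₁)).trans_le (hmax hs₁)
  have hne : ∀ s ∈ Icc a b, w s ≤ 0 → s ≠ t := by
    rintro s hs hws rfl
    exact (div_nonpos_of_nonpos_of_nonneg hws (hψ_pos s hs).le).not_gt hm
  refine ⟨t, ⟨lt_of_le_of_ne ht.1 (hne a (left_mem_Icc.2 (ht.1.trans ht.2)) ha),
    lt_of_le_of_ne ht.2 (hne b (right_mem_Icc.2 (ht.1.trans ht.2)) hb).symm⟩, w t / ψ t, hm,
    (div_mul_cancel₀ _ (hψ_pos t ht).ne').symm, fun s hs => ?_⟩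
  rw [← div_le_iff₀ (hψ_pos s hs)]
  exact hmax hs

/-- Comparison of a support-sense subsolution of `g'' + k g ≤ 1` with a classical
solution of `g̃'' + k g̃ = 1` agreeing at the endpoints. -/
theorem subsolution_ge_solution (k μ : ℝ) (hμ : 0 < μ)
    (hμπ : 0 < k → μ < Real.pi / Real.sqrt k)
    (g gt : ℝ → ℝ)
    (hg : ContinuousOn g (Set.Icc 0 μ)) (hgt : ContinuousOn gt (Set.Icc 0 μ))
    (h0 : g 0 = gt 0) (hμ0 : g μ = gt μ)
    (hdiff : ∀ t ∈ Set.Ioo 0 μ, DifferentiableAt ℝ gt t)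
    (hdiff2 : ∀ t ∈ Set.Ioo 0 μ, DifferentiableAt ℝ (deriv gt) t)
    (hode : ∀ t ∈ Set.Ioo 0 μ, deriv (deriv gt) t + k * gt t = 1)
    (hsupp : ∀ t ∈ Set.Ioo 0 μ, SuppSecondLE g t (1 - k * g t)) :
    ∀ t ∈ Set.Icc 0 μ, gt t ≤ g t := by
  by_contra! hcon
  obtain ⟨α, hkα, hαμ⟩ := exists_sqrt_lt_and_mul_lt_pi hμ hμπ
  have hα : 0 < α := (sqrt_nonneg k).trans_lt hkα
  obtain ⟨t, ht, m, hm, htouch, hle⟩ := exists_mem_Ioo_eq_mul_and_le_mul (w := fun s => gt s - g s)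
    (ψ := fun s => cos (α * (s - μ / 2))) (hgt.sub hg) (by fun_prop)
    (fun s hs => cos_mul_sub_half_pos hα hαμ hs) (by simp [h0]) (by simp [hμ0])
    (hcon.imp fun s ⟨hs, hlt⟩ => ⟨hs, sub_pos.2 hlt⟩)
  have hsupp_touch : SuppSecondLE (fun s => gt s - m * cos (α * (s - μ / 2))) t
      (1 - k * g t) := by
    refine (hsupp t ht).of_eventually_le ?_ (by linarith)
    filter_upwards [Icc_mem_nhds ht.1 ht.2] with s hs
    linarith [hle s hs]
  have hderiv2 := hsupp_touch.le_of_hasDerivAt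
    (f' := fun s => deriv gt s - m * (-α * sin (α * (s - μ / 2))))
    (by
      filter_upwards [Ioo_mem_nhds ht.1 ht.2] with s hs
      exact (hdiff s hs).hasDerivAt.sub ((hasDerivAt_cos_mul_sub α (μ / 2) s).const_mul m))
    ((hdiff2 t ht).hasDerivAt.sub ((hasDerivAt_neg_mul_sin_mul_sub α (μ / 2) t).const_mul m))
  have : 0 < m * (α ^ 2 - k) * cos (α * (t - μ / 2)) :=
    mul_pos (mul_pos hm (by linarith [lt_sq_of_sqrt_lt hkα]))
      (cos_mul_sub_half_pos hα hαμ (Ioo_subset_Icc_self ht))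
  have hk : k * (gt t - g t) = k * (m * cos (α * (t - μ / 2))) := by rw [htouch]
  linarith [hode t ht]
end
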